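/- arXiv:2202.01832 — 4 statements merged into one kernel-verified Lean document; each statement's English description precedes it below -/
import Mathlib

section
/- For regularization parameters c ≥ c' ≥ 0, the relative domain transferability loss is monotone: ℓ_T(f_c) − ℓ_S(f_c) ≥ ℓ_T(f_{c'}) − ℓ_S(f_{c'}), where for each parameter t ≥ 0 the constrained minimizer is f_t := min{1, t/‖y_S‖_D}·y_S. -/
/-!
Every `f_t` is a multiple `a • y_S` with `a = min 1 (t / ‖y_S‖_D) ≤ 1`, and `a` grows with `t`.
On such multiples the source loss is exactly `(1 - a) ‖y_S‖_D`, while by the triangle inequality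
the target loss changes by at most `|b - a| ‖y_S‖_D` between `a` and `b`; so raising `a` lowers
the source loss at least as much as it can lower the target loss.
-/

open MeasureTheory

section

variable {X E : Type*} [MeasurableSpace X] [NormedAddCommGroup E] [NormedSpace ℝ E]
  {D : Measure X}

lemma integral_norm_smul_sub_self (y : X → E) (t : ℝ) :
    ∫ x, ‖t • y x - y x‖ ∂D = |t - 1| * ∫ x, ‖y x‖ ∂D := by
  have hpoint : ∀ x, ‖t • y x - y x‖ = |t - 1| * ‖y x‖ := fun x => by
    rw [← Real.norm_eq_abs, ← norm_smul, sub_smul, one_smul]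
  simp_rw [hpoint]
  exact integral_const_mul _ _

lemma integral_norm_smul_sub_le {y z : X → E} (hy : Integrable y D) (hz : Integrable z D)
    (a b : ℝ) :
    ∫ x, ‖a • y x - z x‖ ∂D ≤ ∫ x, ‖b • y x - z x‖ ∂D + |b - a| * ∫ x, ‖y x‖ ∂D := by
  have hpoint : ∀ x, ‖a • y x - z x‖ ≤ ‖b • y x - z x‖ + |b - a| * ‖y x‖ := fun x => by
    calc ‖a • y x - z x‖ = ‖(b • y x - z x) - (b - a) • y x‖ := by
          rw [sub_smul]; abel_nf
      _ ≤ ‖b • y x - z x‖ + |b - a| * ‖y x‖ := by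
          simpa only [norm_smul, Real.norm_eq_abs] using
            norm_sub_le (b • y x - z x) ((b - a) • y x)
  have hbz : Integrable (fun x => ‖b • y x - z x‖) D := by fun_prop
  have hy' : Integrable (fun x => |b - a| * ‖y x‖) D := hy.norm.const_mul _
  rw [← integral_const_mul, ← integral_add hbz hy']
  exact integral_mono (by fun_prop) (hbz.add hy') hpoint

lemma monotoneOn_integral_norm_smul_sub_sub {y z : X → E} (hy : Integrable y D)
    (hz : Integrable z D) :
    MonotoneOn (fun a : ℝ => ∫ x, ‖a • y x - z x‖ ∂D - ∫ x, ‖a • y x - y x‖ ∂D)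
      (Set.Iic 1) := by
  intro a ha b hb hab
  have htarget := integral_norm_smul_sub_le hy hz a b
  simp only [integral_norm_smul_sub_self, abs_of_nonneg (sub_nonneg.2 hab),
    abs_of_nonpos (sub_nonpos.2 (Set.mem_Iic.1 ha)),
    abs_of_nonpos (sub_nonpos.2 (Set.mem_Iic.1 hb))] at htarget ⊢
  linarith

end

theorem statement1_general {X : Type*} [MeasurableSpace X] {E : Type*}
    [NormedAddCommGroup E] [NormedSpace ℝ E]
    (D : Measure X)
    (yS yT : X → E) (hyS : Integrable yS D) (hyT : Integrable yT D)
    (ft : ℝ → X → E)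
    (hft : ∀ t : ℝ, ft t = fun x => (min 1 (t / ∫ x, ‖yS x‖ ∂D)) • yS x)
    (c c' : ℝ) (hcc' : c' ≤ c) :
    (∫ x, ‖ft c' x - yT x‖ ∂D) - (∫ x, ‖ft c' x - yS x‖ ∂D) ≤
      (∫ x, ‖ft c x - yT x‖ ∂D) - (∫ x, ‖ft c x - yS x‖ ∂D) := by
  have hscale : min 1 (c' / ∫ x, ‖yS x‖ ∂D) ≤ min 1 (c / ∫ x, ‖yS x‖ ∂D) :=
    min_le_min_left 1 (div_le_div_of_nonneg_right hcc' (integral_nonneg fun _ => norm_nonneg _))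
  rw [hft c, hft c']
  exact monotoneOn_integral_norm_smul_sub_sub hyS hyT
    (Set.mem_Iic.2 (min_le_left _ _)) (Set.mem_Iic.2 (min_le_left _ _)) hscale

/-- With `‖f‖_D := ∫ x, ‖f x‖ ∂D`, source loss `ℓ_S f := ‖f - yS‖_D`, target
loss `ℓ_T f := ‖f - yT‖_D`, and constrained minimizer `f_t := min {1, t/‖yS‖_D} • yS` for each
regularization parameter `t ≥ 0`: if `c ≥ c' ≥ 0`, then
`ℓ_T(f_c) − ℓ_S(f_c) ≥ ℓ_T(f_{c'}) − ℓ_S(f_{c'})`. -/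
theorem statement1 {X : Type*} [MeasurableSpace X] {E : Type*}
    [NormedAddCommGroup E] [NormedSpace ℝ E]
    (D : Measure X) [IsProbabilityMeasure D]
    (yS yT : X → E) (hyS : Integrable yS D) (hyT : Integrable yT D)
    (hySpos : 0 < ∫ x, ‖yS x‖ ∂D)
    (ft : ℝ → X → E)
    (hft : ∀ t : ℝ, ft t = fun x => (min 1 (t / ∫ x, ‖yS x‖ ∂D)) • yS x)
    (c c' : ℝ) (hc' : 0 ≤ c') (hcc' : c' ≤ c) :
    (∫ x, ‖ft c' x - yT x‖ ∂D) - (∫ x, ‖ft c' x - yS x‖ ∂D) ≤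
      (∫ x, ‖ft c x - yT x‖ ∂D) - (∫ x, ‖ft c x - yS x‖ ∂D) :=
  statement1_general D yS yT hyS hyT ft hft c c' hcc'
end

section
/- Let r > 0 and let S_r^{d−1} := {y ∈ ℝ^d : ‖y‖₂ = r} be the sphere of radius r. If a function h : S_r^{d−1} → ℝ^d satisfies ⟨h(y), y⟩ < 0 for all y ∈ S_r^{d−1}, then the zero vector lies in the convex hull of the image: 0 ∈ conv({h(y) : y ∈ S_r^{d−1}}). -/
/-!
If `0 ∉ conv (h '' S)`, then some unit vector `v` has `⟪v, h y⟫ ≥ 0` for every `y` on the sphere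
(weak separation), and `y := r • v` violates `⟪h y, y⟫ < 0`. Since the hull need not be closed,
weak separation is obtained from strict separation of finite subsets together with compactness
of the unit sphere.
-/

open scoped RealInnerProductSpace
open Metric

section Separation

variable {E : Type*} [NormedAddCommGroup E] [InnerProductSpace ℝ E] [FiniteDimensional ℝ E]

lemma exists_inner_pos_of_zero_notMem_convexHull_of_finite {F : Set E} (hF : F.Finite)
    (h0 : (0 : E) ∉ convexHull ℝ F) : ∃ w : E, ∀ a ∈ F, 0 < ⟪w, a⟫ := by
  obtain ⟨f, u, hfu, hu⟩ :=
    geometric_hahn_banach_point_closed (convex_convexHull ℝ F) (hF.isClosed_convexHull ℝ) h0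
  refine ⟨(InnerProductSpace.toDual ℝ E).symm f, fun a ha => ?_⟩
  rw [map_zero] at hfu
  rw [InnerProductSpace.toDual_symm_apply]
  exact hfu.trans (hu a (subset_convexHull ℝ F ha))

variable [Nontrivial E]

lemma exists_mem_sphere_inner_nonneg_of_finite {F : Set E} (hF : F.Finite)
    (h0 : (0 : E) ∉ convexHull ℝ F) : ∃ v ∈ sphere (0 : E) 1, ∀ a ∈ F, 0 ≤ ⟪v, a⟫ := by
  rcases F.eq_empty_or_nonempty with rfl | ⟨a₀, ha₀⟩
  · obtain ⟨v, hv⟩ := (NormedSpace.sphere_nonempty (E := E) (x := 0)).2 zero_le_one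
    exact ⟨v, hv, by simp⟩
  obtain ⟨w, hw⟩ := exists_inner_pos_of_zero_notMem_convexHull_of_finite hF h0
  have hw0 : w ≠ 0 := by
    rintro rfl
    simpa using hw a₀ ha₀
  refine ⟨‖w‖⁻¹ • w, by simp [norm_smul, hw0], fun a ha => ?_⟩
  rw [real_inner_smul_left]
  exact mul_nonneg (by positivity) (hw a ha).le

lemma exists_mem_sphere_inner_nonneg_of_zero_notMem_convexHull {A : Set E}
    (h0 : (0 : E) ∉ convexHull ℝ A) : ∃ v ∈ sphere (0 : E) 1, ∀ a ∈ A, 0 ≤ ⟪v, a⟫ := by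
  have hclosed (a : A) : IsClosed {v : E | 0 ≤ ⟪v, (a : E)⟫} :=
    isClosed_le continuous_const (continuous_id.inner continuous_const)
  have hfinite (u : Finset A) :
      (sphere (0 : E) 1 ∩ ⋂ a ∈ u, {v : E | 0 ≤ ⟪v, (a : E)⟫}).Nonempty := by
    have h0u : (0 : E) ∉ convexHull ℝ ((↑) '' (u : Set A)) :=
      fun h => h0 (convexHull_mono (Subtype.coe_image_subset A _) h)
    obtain ⟨v, hv, hnonneg⟩ :=
      exists_mem_sphere_inner_nonneg_of_finite (u.finite_toSet.image _) h0u
    exact ⟨v, hv, Set.mem_iInter₂.2 fun a ha => hnonneg a ⟨a, ha, rfl⟩⟩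
  obtain ⟨v, hv, hnonneg⟩ := (isCompact_sphere (0 : E) 1).inter_iInter_nonempty _ hclosed hfinite
  exact ⟨v, hv, fun a ha => Set.mem_iInter.1 hnonneg ⟨a, ha⟩⟩

end Separation

/-- Let `S_r^{d−1} = {y ∈ ℝ^d : ‖y‖₂ = r}` with `r > 0` (and `d ≥ 1` so that
the sphere is nonempty).  If `h : ℝ^d → ℝ^d` satisfies `⟨h(y), y⟩ < 0` for every `y` on the
sphere, then `0` lies in the convex hull of the image `{h(y) : ‖y‖₂ = r}`. -/
theorem statement8 {d : ℕ} (hd : 0 < d) (r : ℝ) (hr : 0 < r)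
    (h : EuclideanSpace ℝ (Fin d) → EuclideanSpace ℝ (Fin d))
    (hh : ∀ y : EuclideanSpace ℝ (Fin d), ‖y‖ = r → ⟪h y, y⟫ < 0) :
    (0 : EuclideanSpace ℝ (Fin d)) ∈
      convexHull ℝ (h '' {y : EuclideanSpace ℝ (Fin d) | ‖y‖ = r}) := by
  have : NeZero d := ⟨hd.ne'⟩
  by_contra h0
  obtain ⟨v, hv, hnonneg⟩ := exists_mem_sphere_inner_nonneg_of_zero_notMem_convexHull h0
  have hy : ‖r • v‖ = r := by
    rw [norm_smul, mem_sphere_zero_iff_norm.1 hv, Real.norm_of_nonneg hr.le, mul_one]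
  refine (hh _ hy).not_ge ?_
  rw [real_inner_smul_right, real_inner_comm]
  exact mul_nonneg hr.le (hnonneg _ ⟨_, hy, rfl⟩)
end

section
/- Under feature-level data augmentation with affine transformation parameters (W★, b★) satisfying E[W★] = I_d, E[b★] = 0, and W★ independent of b★ (with finite second moments), the augmented loss-averaging objective equals the unaugmented objective plus a regularizer: (1/n) Σ_{i=1}^{n} E_{W★,b★}[ (⟨W_g, W★ f(xᵢ) + b★⟩ − yᵢ)² ] = (1/n) Σ_{i=1}^{n} (⟨W_g, f(xᵢ)⟩ − yᵢ)² + Ω, where Ω = (1/n) Σ_{i=1}^{n} E_{W★}[ (f(xᵢ)ᵀ (W★ − I_d) W_g)² ] + E_{b★}[ (b★ᵀ W_g)² ]. -/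
/-!
Write the augmented residual as `A + B + c`, where `A = ⟨W_g, (W★ - I) f(x)⟩`,
`B = ⟨W_g, b★⟩` and `c = ⟨W_g, f(x)⟩ - y` is the clean residual. Both `A` and `B` are centred,
and they are independent because `W★` and `b★` are, so
`E[(A + B + c)²] = Var(A + B) + c² = E[A²] + E[B²] + c²`. Averaging over the samples gives the
identity.
-/

open MeasureTheory ProbabilityTheory

section

variable {Ω : Type*} [MeasurableSpace Ω] {μ : Measure Ω}

lemma IndepFun.integral_add_add_const_sq [IsProbabilityMeasure μ] {A B : Ω → ℝ}
    (hA : MemLp A 2 μ) (hB : MemLp B 2 μ) (hAB : IndepFun A B μ)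
    (hA0 : ∫ ω, A ω ∂μ = 0) (hB0 : ∫ ω, B ω ∂μ = 0) (c : ℝ) :
    ∫ ω, (A ω + B ω + c) ^ 2 ∂μ = c ^ 2 + (∫ ω, A ω ^ 2 ∂μ + ∫ ω, B ω ^ 2 ∂μ) := by
  have hAB2 : MemLp (fun ω => A ω + B ω) 2 μ := hA.add hB
  have hZ : MemLp (fun ω => A ω + B ω + c) 2 μ := hAB2.add (memLp_const c)
  have hmean : ∫ ω, (A ω + B ω + c) ∂μ = c := by
    rw [integral_add (hAB2.integrable one_le_two) (integrable_const c),
      integral_add (hA.integrable one_le_two) (hB.integrable one_le_two), hA0, hB0]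
    simp
  have hvar : Var[fun ω => A ω + B ω + c; μ] = ∫ ω, A ω ^ 2 ∂μ + ∫ ω, B ω ^ 2 ∂μ := by
    rw [variance_add_const hAB2.aestronglyMeasurable, hAB.variance_fun_add hA hB,
      variance_of_integral_eq_zero hA.aemeasurable hA0,
      variance_of_integral_eq_zero hB.aemeasurable hB0]
  have h := variance_eq_sub hZ
  simp only [Pi.pow_apply, hvar, hmean] at h
  linarith

lemma integral_sum_const_mul {ι : Type*} [Fintype ι] {X : ι → Ω → ℝ}
    (hX : ∀ k, Integrable (X k) μ) (u : ι → ℝ) :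
    ∫ ω, ∑ k, u k * X k ω ∂μ = ∑ k, u k * ∫ ω, X k ω ∂μ := by
  rw [integral_finsetSum _ fun k _ => (hX k).const_mul (u k)]
  simp only [integral_const_mul]

lemma memLp_sum_const_mul {ι : Type*} [Fintype ι] {X : ι → Ω → ℝ} {p : ENNReal}
    (hX : ∀ k, MemLp (X k) p μ) (u : ι → ℝ) :
    MemLp (fun ω => ∑ k, u k * X k ω) p μ :=
  memLp_finsetSum _ fun k _ => (hX k).const_mul (u k)

section Augmentation

variable [IsProbabilityMeasure μ] {ι : Type*} [Fintype ι] [DecidableEq ι]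
  {W : Ω → ι → ι → ℝ} {b : Ω → ι → ℝ}

lemma memLp_perturbation (hW2 : ∀ k j, MemLp (fun ω => W ω k j) 2 μ) (u v : ι → ℝ) :
    MemLp (fun ω => ∑ k, u k * ∑ j, (W ω k j - if k = j then 1 else 0) * v j) 2 μ :=
  memLp_sum_const_mul (fun k => memLp_finsetSum _ fun j _ =>
    ((hW2 k j).sub (memLp_const _)).mul_const (v j)) u

lemma integral_perturbation_eq_zero (hW2 : ∀ k j, MemLp (fun ω => W ω k j) 2 μ)
    (hWmean : ∀ k j, ∫ ω, W ω k j ∂μ = if k = j then 1 else 0) (u v : ι → ℝ) :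
    ∫ ω, ∑ k, u k * ∑ j, (W ω k j - if k = j then 1 else 0) * v j ∂μ = 0 := by
  have hint : ∀ k j, Integrable (fun ω => (W ω k j - if k = j then 1 else 0) * v j) μ :=
    fun k j => (((hW2 k j).integrable one_le_two).sub (integrable_const _)).mul_const (v j)
  rw [integral_sum_const_mul fun k => integrable_finsetSum _ fun j _ => hint k j]
  refine Finset.sum_eq_zero fun k _ => ?_
  rw [integral_finsetSum _ fun j _ => hint k j, Finset.sum_eq_zero fun j _ => ?_, mul_zero]
  rw [integral_mul_const, integral_sub ((hW2 k j).integrable one_le_two) (integrable_const _),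
    hWmean, integral_const]
  simp

lemma augmented_residual_eq (W : ι → ι → ℝ) (b u v : ι → ℝ) (t : ℝ) :
    ∑ k, u k * ((∑ j, W k j * v j) + b k) - t =
      (∑ k, u k * ∑ j, (W k j - if k = j then 1 else 0) * v j) + (∑ k, u k * b k) +
        (∑ k, u k * v k - t) := by
  simp only [sub_mul, Finset.sum_sub_distrib, mul_sub, mul_add, Finset.sum_add_distrib, ite_mul,
    one_mul, zero_mul, Finset.sum_ite_eq, Finset.mem_univ, if_true]
  ring

theorem integral_augmented_sq_loss (hW2 : ∀ k j, MemLp (fun ω => W ω k j) 2 μ)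
    (hb2 : ∀ k, MemLp (fun ω => b ω k) 2 μ)
    (hWmean : ∀ k j, ∫ ω, W ω k j ∂μ = if k = j then 1 else 0)
    (hbmean : ∀ k, ∫ ω, b ω k ∂μ = 0) (hindep : IndepFun W b μ) (u v : ι → ℝ) (t : ℝ) :
    ∫ ω, (∑ k, u k * ((∑ j, W ω k j * v j) + b ω k) - t) ^ 2 ∂μ =
      (∑ k, u k * v k - t) ^ 2 +
        ((∫ ω, (∑ k, u k * ∑ j, (W ω k j - if k = j then 1 else 0) * v j) ^ 2 ∂μ) +
          ∫ ω, (∑ k, u k * b ω k) ^ 2 ∂μ) := by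
  have hb0 : ∫ ω, ∑ k, u k * b ω k ∂μ = 0 := by
    simp [integral_sum_const_mul fun k => (hb2 k).integrable one_le_two, hbmean]
  have hb : MemLp (fun ω => ∑ k, u k * b ω k) 2 μ :=
    memLp_sum_const_mul (X := fun k ω => b ω k) hb2 u
  have hind : IndepFun (fun ω => ∑ k, u k * ∑ j, (W ω k j - if k = j then 1 else 0) * v j)
      (fun ω => ∑ k, u k * b ω k) μ :=
    hindep.comp
      (φ := fun M : ι → ι → ℝ => ∑ k, u k * ∑ j, (M k j - if k = j then 1 else 0) * v j)
      (ψ := fun z : ι → ℝ => ∑ k, u k * z k) (by fun_prop) (by fun_prop)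
  simp_rw [augmented_residual_eq]
  exact IndepFun.integral_add_add_const_sq (memLp_perturbation hW2 u v) hb hind
    (integral_perturbation_eq_zero hW2 hWmean u v) hb0 _

end Augmentation

end

theorem statement12_general {m d n : ℕ} (hn : 0 < n)
    (f : (Fin m → ℝ) → Fin d → ℝ) (Wg : Fin d → ℝ)
    (x : Fin n → Fin m → ℝ) (y : Fin n → ℝ)
    {Ω : Type*} [MeasurableSpace Ω] (μ : Measure Ω) [IsProbabilityMeasure μ]
    (W : Ω → Fin d → Fin d → ℝ) (b : Ω → Fin d → ℝ)
    (hW2 : ∀ k j, MemLp (fun ω => W ω k j) 2 μ)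
    (hb2 : ∀ k, MemLp (fun ω => b ω k) 2 μ)
    (hWmean : ∀ k j, (∫ ω, W ω k j ∂μ) = if k = j then 1 else 0)
    (hbmean : ∀ k, (∫ ω, b ω k ∂μ) = 0)
    (hindep : ProbabilityTheory.IndepFun W b μ) :
    (1 / (n : ℝ)) * ∑ i : Fin n,
        ∫ ω, (∑ k : Fin d, Wg k * ((∑ j : Fin d, W ω k j * f (x i) j) + b ω k) - y i) ^ 2 ∂μ =
      (1 / (n : ℝ)) * ∑ i : Fin n, (∑ k : Fin d, Wg k * f (x i) k - y i) ^ 2 +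
        ((1 / (n : ℝ)) * ∑ i : Fin n,
            (∫ ω, (∑ k : Fin d, Wg k *
              ∑ j : Fin d, (W ω k j - if k = j then 1 else 0) * f (x i) j) ^ 2 ∂μ) +
          ∫ ω, (∑ k : Fin d, Wg k * b ω k) ^ 2 ∂μ) := by
  simp_rw [integral_augmented_sq_loss hW2 hb2 hWmean hbmean hindep]
  have hn' : (n : ℝ) ≠ 0 := by positivity
  rw [Finset.sum_add_distrib, Finset.sum_add_distrib, Finset.sum_const, Finset.card_univ,
    Fintype.card_fin, nsmul_eq_mul]
  field_simp

/-- **feature-level data augmentation as regularization.**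
The feature extractor is `f : ℝ^m → ℝ^d`, the fine-tuning function is the linear map
`z ↦ ⟨W_g, z⟩`, and the loss is the squared loss.  Feature-level data augmentation replaces the
feature `f(x)` by `W★ f(x) + b★`, where `(W★, b★)` are random (modeled as measurable functions
on a probability space `(Ω, μ)`) with finite second moments, satisfying `E[W★] = I_d`,
`E[b★] = 0`, and `W★` independent of `b★`.  Then the loss-averaging augmented objective equals
the unaugmented objective plus the regularizer
`Ω = (1/n) Σᵢ E_{W★}[(⟨W_g, (W★ − I_d) f(xᵢ)⟩)²] + E_{b★}[(⟨W_g, b★⟩)²]`. -/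
theorem statement12 {m d n : ℕ} (hn : 0 < n)
    (f : (Fin m → ℝ) → Fin d → ℝ) (Wg : Fin d → ℝ)
    (x : Fin n → Fin m → ℝ) (y : Fin n → ℝ)
    {Ω : Type*} [MeasurableSpace Ω] (μ : Measure Ω) [IsProbabilityMeasure μ]
    (W : Ω → Fin d → Fin d → ℝ) (b : Ω → Fin d → ℝ)
    (hWmeas : Measurable W) (hbmeas : Measurable b)
    (hW2 : ∀ k j, MemLp (fun ω => W ω k j) 2 μ)
    (hb2 : ∀ k, MemLp (fun ω => b ω k) 2 μ)
    (hWmean : ∀ k j, (∫ ω, W ω k j ∂μ) = if k = j then 1 else 0)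
    (hbmean : ∀ k, (∫ ω, b ω k ∂μ) = 0)
    (hindep : ProbabilityTheory.IndepFun W b μ) :
    (1 / (n : ℝ)) * ∑ i : Fin n,
        ∫ ω, (∑ k : Fin d, Wg k * ((∑ j : Fin d, W ω k j * f (x i) j) + b ω k) - y i) ^ 2 ∂μ =
      (1 / (n : ℝ)) * ∑ i : Fin n, (∑ k : Fin d, Wg k * f (x i) k - y i) ^ 2 +
        ((1 / (n : ℝ)) * ∑ i : Fin n,
            (∫ ω, (∑ k : Fin d, Wg k *
              ∑ j : Fin d, (W ω k j - if k = j then 1 else 0) * f (x i) j) ^ 2 ∂μ) +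
          ∫ ω, (∑ k : Fin d, Wg k * b ω k) ^ 2 ∂μ) :=
  statement12_general hn f Wg x y μ W b hW2 hb2 hWmean hbmean hindep
end

section
/- Let ℓ : ℝ^d × ℝ^d → [0, ∞) be differentiable and strictly convex in its first argument with ℓ(y, y) = 0 for all y ∈ ℝ^d. Then for every r > 0 there exist finitely many points y₁, …, yₙ with ‖yᵢ‖₂ = r and weights c₁, …, cₙ > 0 with Σᵢ cᵢ = 1 such that Σᵢ cᵢ ∇₁ℓ(0, yᵢ) = 0, and consequently the strictly convex function h(u) := Σᵢ cᵢ ℓ(u, yᵢ) attains its unique global minimum over ℝ^d at u = 0. -/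
/-!
Put `v y := ∇₁ℓ(0, y)`. The first-order condition for the strictly convex `ℓ(·, y)` between `0` and
`y` gives `⟪v y, y⟫ < ℓ(y, y) - ℓ(0, y) ≤ 0` for `y ≠ 0`. Hence `0` lies in the convex hull of the
image under `v` of the sphere of radius `r`: a nonzero functional `⟪w, ·⟫ ≤ 0` on that hull would
contradict `⟪v y, y⟫ < 0` at `y = -r w / ‖w‖`. Since `v` need not be continuous, this hull need not
be closed, so the separation used is the weak one from an arbitrary convex set, which holds in
finite dimension. Carathéodory then yields finitely many `yᵢ` with positive weights `cᵢ` and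
`∑ cᵢ v yᵢ = 0`, and summing the strict first-order conditions shows that `0` is the strict global
minimiser of `∑ cᵢ ℓ(·, yᵢ)`.
-/

open scoped RealInnerProductSpace

open Set

section FirstOrderCondition

variable {E : Type*} [NormedAddCommGroup E] [NormedSpace ℝ E] {s : Set E} {f : E → ℝ}
  {f' : StrongDual ℝ E} {x y : E}

theorem ConvexOn.le_sub_of_hasFDerivAt (hf : ConvexOn ℝ s f) (hf' : HasFDerivAt f f' x)
    (hx : x ∈ s) (hy : y ∈ s) : f' (y - x) ≤ f y - f x := by
  let g : ℝ →ᵃ[ℝ] E := AffineMap.lineMap x y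
  have hg : HasDerivAt (f ∘ g) (f' (y - x)) 0 := by
    have hf'0 : HasFDerivAt f f' (g 0) := by simpa [g] using hf'
    simpa [g] using hf'0.comp_hasDerivAt (0 : ℝ) AffineMap.hasDerivAt_lineMap
  simpa [g, slope] using
    (hf.comp_affineMap g).le_slope_of_hasDerivAt (by simpa [g] using hx) (by simpa [g] using hy)
      one_pos hg

theorem StrictConvexOn.lt_sub_of_hasFDerivAt (hf : StrictConvexOn ℝ s f)
    (hf' : HasFDerivAt f f' x) (hx : x ∈ s) (hy : y ∈ s) (hxy : x ≠ y) :
    f' (y - x) < f y - f x := by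
  set m : E := (2⁻¹ : ℝ) • x + (2⁻¹ : ℝ) • y
  have hm : m ∈ s := hf.1 hx hy (by norm_num) (by norm_num) (by norm_num)
  have hmid : f m < 2⁻¹ * f x + 2⁻¹ * f y := hf.2 hx hy hxy (by norm_num) (by norm_num) (by norm_num)
  have hle := hf.convexOn.le_sub_of_hasFDerivAt hf' hx hm
  have hym : y - x = (2 : ℝ) • (m - x) := by simp only [m]; module
  rw [hym, map_smul, smul_eq_mul]
  linarith

end FirstOrderCondition

theorem StrictConvexOn.sum_mul {E ι : Type*} [AddCommGroup E] [Module ℝ E] {s : Set E}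
    {t : Finset ι} (ht : t.Nonempty) {c : ι → ℝ} (hc : ∀ i ∈ t, 0 < c i) {f : ι → E → ℝ}
    (hf : ∀ i ∈ t, StrictConvexOn ℝ s (f i)) :
    StrictConvexOn ℝ s fun u => ∑ i ∈ t, c i * f i u := by
  obtain ⟨i₀, hi₀⟩ := ht
  refine ⟨(hf i₀ hi₀).1, fun x hx y hy hxy a b ha hb hab => ?_⟩
  calc ∑ i ∈ t, c i * f i (a • x + b • y)
      < ∑ i ∈ t, c i * (a • f i x + b • f i y) :=
        Finset.sum_lt_sum_of_nonempty ⟨i₀, hi₀⟩ fun i hi =>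
          mul_lt_mul_of_pos_left ((hf i hi).2 hx hy hxy ha hb hab) (hc i hi)
    _ = a • ∑ i ∈ t, c i * f i x + b • ∑ i ∈ t, c i * f i y := by
        simp only [smul_eq_mul, Finset.mul_sum, ← Finset.sum_add_distrib]
        exact Finset.sum_congr rfl fun i _ => by ring

section Separation

variable {E : Type*} [NormedAddCommGroup E] [NormedSpace ℝ E] [FiniteDimensional ℝ E]

theorem Convex.exists_ne_zero_forall_le_of_notMem {C : Set E} (hC : Convex ℝ C)
    (hne : C.Nonempty) {x : E} (hx : x ∉ C) :
    ∃ f : StrongDual ℝ E, f ≠ 0 ∧ ∀ a ∈ C, f a ≤ f x := by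
  by_cases hint : (interior C).Nonempty
  · exact geometric_hahn_banach_of_nonempty_interior_point hC
      (fun h => hx (interior_subset h)) hint
  -- `C` then lies in a proper affine subspace, on which a nonzero functional is constant.
  obtain ⟨p, hp⟩ := hne
  have hdir : (affineSpan ℝ C).direction < ⊤ := by
    rw [lt_top_iff_ne_top, Ne, AffineSubspace.direction_eq_top_iff_of_nonempty
      ⟨p, subset_affineSpan ℝ C hp⟩, ← hC.interior_nonempty_iff_affineSpan_eq_top]
    exact hint
  obtain ⟨g, hg0, hker⟩ := Submodule.exists_le_ker_of_lt_top _ hdir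
  have hconst : ∀ a ∈ C, g a = g p := fun a ha => by
    rw [← sub_eq_zero, ← map_sub]
    exact hker (AffineSubspace.vsub_mem_direction (subset_affineSpan ℝ C ha)
      (subset_affineSpan ℝ C hp))
  let f : StrongDual ℝ E := LinearMap.toContinuousLinearMap g
  have hf0 : f ≠ 0 := fun h => hg0 (by ext v; exact congr($h v))
  rcases le_total (f p) (f x) with h | h
  · exact ⟨f, hf0, fun a ha => (hconst a ha).trans_le h⟩
  · refine ⟨-f, neg_ne_zero.mpr hf0, fun a ha => ?_⟩
    simp only [neg_apply, neg_le_neg_iff]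
    exact h.trans_eq (hconst a ha).symm

end Separation

theorem exists_fin_pos_weights_of_mem_convexHull {E : Type*} [AddCommGroup E] [Module ℝ E]
    {S : Set E} {x : E} (hx : x ∈ convexHull ℝ S) :
    ∃ (n : ℕ) (_ : 0 < n) (z : Fin n → E) (c : Fin n → ℝ),
      (∀ i, z i ∈ S) ∧ (∀ i, 0 < c i) ∧ ∑ i, c i = 1 ∧ ∑ i, c i • z i = x := by
  obtain ⟨ι, _, z, c, hzS, -, hc, hc1, hcz⟩ := eq_pos_convex_span_of_mem_convexHull hx
  let e := (Fintype.equivFin ι).symm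
  have hn : 0 < Fintype.card ι := by
    rw [Fintype.card_pos_iff]
    by_contra!
    simp at hc1
  exact ⟨_, hn, z ∘ e, c ∘ e, fun i => hzS ⟨_, rfl⟩, fun i => hc _,
    by simpa [e] using (e.sum_comp c).trans hc1,
    by simpa [e] using (e.sum_comp fun i => c i • z i).trans hcz⟩

section InnerProductSpace

variable {E : Type*} [NormedAddCommGroup E] [InnerProductSpace ℝ E]

theorem StrictConvexOn.inner_lt_sub_of_hasGradientAt [CompleteSpace E] {s : Set E} {f : E → ℝ}
    {g x y : E} (hf : StrictConvexOn ℝ s f) (hg : HasGradientAt f g x) (hx : x ∈ s) (hy : y ∈ s)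
    (hxy : x ≠ y) : ⟪g, y - x⟫ < f y - f x :=
  hf.lt_sub_of_hasFDerivAt hg.hasFDerivAt hx hy hxy

theorem sum_mul_lt_sum_mul_of_sum_smul_gradient_eq_zero [CompleteSpace E] {ι : Type*}
    {s : Set E} {t : Finset ι} (ht : t.Nonempty) {c : ι → ℝ} (hc : ∀ i ∈ t, 0 < c i)
    {f : ι → E → ℝ} {g : ι → E} {x u : E} (hf : ∀ i ∈ t, StrictConvexOn ℝ s (f i))
    (hg : ∀ i ∈ t, HasGradientAt (f i) (g i) x) (hcg : ∑ i ∈ t, c i • g i = 0) (hx : x ∈ s)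
    (hu : u ∈ s) (hxu : x ≠ u) : ∑ i ∈ t, c i * f i x < ∑ i ∈ t, c i * f i u := by
  have key : ∑ i ∈ t, c i * ⟪g i, u - x⟫ < ∑ i ∈ t, c i * (f i u - f i x) :=
    Finset.sum_lt_sum_of_nonempty ht fun i hi => mul_lt_mul_of_pos_left
      ((hf i hi).inner_lt_sub_of_hasGradientAt (hg i hi) hx hu hxu) (hc i hi)
  have hzero : ∑ i ∈ t, c i * ⟪g i, u - x⟫ = 0 := by
    simp_rw [← real_inner_smul_left, ← sum_inner, hcg, inner_zero_left]
  simp only [mul_sub, Finset.sum_sub_distrib, hzero] at key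
  linarith

theorem zero_mem_convexHull_image_sphere [FiniteDimensional ℝ E] [Nontrivial E] {v : E → E}
    (hv : ∀ y ≠ 0, ⟪v y, y⟫ < 0) {r : ℝ} (hr : 0 < r) :
    (0 : E) ∈ convexHull ℝ (v '' Metric.sphere 0 r) := by
  by_contra h0
  obtain ⟨f, hf0, hf⟩ := (convex_convexHull ℝ _).exists_ne_zero_forall_le_of_notMem
    (((NormedSpace.sphere_nonempty.mpr hr.le).image v).mono (subset_convexHull ℝ _)) h0
  set w := (InnerProductSpace.toDual ℝ E).symm f
  have hw : w ≠ 0 := by simpa [w] using hf0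
  have hw' : 0 < ‖w‖ := norm_pos_iff.mpr hw
  set y := -(r / ‖w‖) • w
  have hy : y ∈ Metric.sphere (0 : E) r := by
    simp [y, norm_smul, abs_of_pos hr, hw'.ne']
  have hy0 : y ≠ 0 := Metric.ne_of_mem_sphere hy hr.ne'
  have h1 : ⟪w, v y⟫ ≤ 0 := by
    simpa [w, InnerProductSpace.toDual_symm_apply] using hf _ (subset_convexHull ℝ _ ⟨y, hy, rfl⟩)
  have h2 := hv y hy0
  rw [inner_smul_right, real_inner_comm] at h2
  nlinarith [div_pos hr hw']

end InnerProductSpace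

/-- Let `ℓ : ℝ^d × ℝ^d → [0, ∞)` (`d ≥ 1`) be differentiable and strictly
convex in its first argument with `ℓ(y, y) = 0` for all `y`.  Then for every `r > 0` there exist
finitely many points `y₁, …, yₙ` on the sphere `‖yᵢ‖₂ = r` and weights `cᵢ > 0` with `Σᵢ cᵢ = 1`
such that `Σᵢ cᵢ ∇₁ℓ(0, yᵢ) = 0`; consequently the strictly convex function
`h(u) := Σᵢ cᵢ ℓ(u, yᵢ)` attains its unique global minimum over `ℝ^d` at `u = 0`. -/
theorem statement15 {d : ℕ} (hd : 0 < d)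
    (ℓ : EuclideanSpace ℝ (Fin d) → EuclideanSpace ℝ (Fin d) → ℝ)
    (hℓnonneg : ∀ u y, 0 ≤ ℓ u y)
    (hℓdiff : ∀ y, Differentiable ℝ fun u => ℓ u y)
    (hℓconv : ∀ y, StrictConvexOn ℝ Set.univ fun u => ℓ u y)
    (hℓdiag : ∀ y, ℓ y y = 0) :
    ∀ r : ℝ, 0 < r →
      ∃ (n : ℕ) (_ : 0 < n) (y : Fin n → EuclideanSpace ℝ (Fin d)) (c : Fin n → ℝ),
        (∀ i, ‖y i‖ = r) ∧ (∀ i, 0 < c i) ∧ (∑ i, c i = 1) ∧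
        (∑ i, c i • gradient (fun u => ℓ u (y i)) 0 = 0) ∧
        StrictConvexOn ℝ Set.univ (fun u => ∑ i, c i * ℓ u (y i)) ∧
        ∀ u : EuclideanSpace ℝ (Fin d), u ≠ 0 →
          (∑ i, c i * ℓ 0 (y i)) < ∑ i, c i * ℓ u (y i) := by
  intro r hr
  have : Nonempty (Fin d) := ⟨⟨0, hd⟩⟩
  set v := fun y => gradient (fun u => ℓ u y) 0
  have hgrad : ∀ y, HasGradientAt (fun u => ℓ u y) (v y) 0 := fun y =>
    (hℓdiff y 0).hasGradientAt
  have hv : ∀ y ≠ 0, ⟪v y, y⟫ < 0 := fun y hy => by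
    have := (hℓconv y).inner_lt_sub_of_hasGradientAt (hgrad y) trivial trivial hy.symm
    rw [sub_zero, hℓdiag] at this
    linarith [hℓnonneg 0 y]
  obtain ⟨n, hn, z, c, hz, hc, hc1, hcz⟩ :=
    exists_fin_pos_weights_of_mem_convexHull (zero_mem_convexHull_image_sphere hv hr)
  choose y hy hvy using hz
  have huniv : (Finset.univ : Finset (Fin n)).Nonempty := Finset.univ_nonempty_iff.mpr ⟨⟨0, hn⟩⟩
  have hcv : ∑ i, c i • v (y i) = 0 := by simpa only [hvy] using hcz
  refine ⟨n, hn, y, c, fun i => mem_sphere_zero_iff_norm.mp (hy i), hc, hc1, hcv,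
    StrictConvexOn.sum_mul huniv (fun i _ => hc i) fun i _ => hℓconv _, fun u hu => ?_⟩
  exact sum_mul_lt_sum_mul_of_sum_smul_gradient_eq_zero huniv (fun i _ => hc i)
    (fun i _ => hℓconv _) (fun i _ => hgrad _) hcv trivial trivial hu.symm
end
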